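/- With G and φ as in the previous statement, let z = g^{-6}·[y,x] where [y,x] = y·x·y^{-1}·x^{-1}. Then φ(z) = z·w. -/

import Mathlib

/-!
Since `φ` fixes `g`, `φ z = g⁻⁶ ⁅y x w, y⁻¹ a⁆`. The involution `w` commutes with `y` and `a`,
so it drops out of this commutator; and as `a` commutes with `x` and conjugates `y` to `y w`,
`⁅y x, y⁻¹ a⁆ = ⁅y, x⁆ w⁻¹ = ⁅y, x⁆ w`.
-/

namespace EyralOkaG

open FreeGroup

/-- Generators of `G = ((F₂ × ℤ/2) ⋊ V) ⋊ ℤ`: `g = 0`, `x = 1`, `y = 2`, `w = 3`,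
`a = 4`, `b = 5`. -/
def Gg : FreeGroup (Fin 6) := of 0
def X : FreeGroup (Fin 6) := of 1
def Y : FreeGroup (Fin 6) := of 2
def W : FreeGroup (Fin 6) := of 3
def A : FreeGroup (Fin 6) := of 4
def B : FreeGroup (Fin 6) := of 5

/-- Defining relations of `G = G' ⋊ ℤ`, where `G' = (F₂ × ℤ/2) ⋊ V` is generated by
`x, y, w, a, b` as before and the generator `g` of `ℤ` acts by `g x g⁻¹ = y⁻¹`,
`g y g⁻¹ = y·x·b`, `g w g⁻¹ = w`, `g a g⁻¹ = b`, `g b g⁻¹ = a·b`. -/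
def GRels : Set (FreeGroup (Fin 6)) :=
  { W * W, X * W * X⁻¹ * W⁻¹, Y * W * Y⁻¹ * W⁻¹,
    A * A, B * B, A * B * A⁻¹ * B⁻¹,
    A * X * A⁻¹ * X⁻¹, A * Y * A⁻¹ * (Y * W)⁻¹, A * W * A⁻¹ * W⁻¹,
    B * X * B⁻¹ * (X * W)⁻¹, B * Y * B⁻¹ * Y⁻¹, B * W * B⁻¹ * W⁻¹,
    Gg * X * Gg⁻¹ * (Y⁻¹)⁻¹, Gg * Y * Gg⁻¹ * (Y * X * B)⁻¹, Gg * W * Gg⁻¹ * W⁻¹,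
    Gg * A * Gg⁻¹ * B⁻¹, Gg * B * Gg⁻¹ * (A * B)⁻¹ }

/-- The fundamental group `G` of the affine Eyral-Oka curve complement, via its explicit
semidirect product presentation. -/
def G : Type := PresentedGroup GRels

instance : Group G := by unfold G; infer_instance

def g : G := PresentedGroup.of 0
def x : G := PresentedGroup.of 1
def y : G := PresentedGroup.of 2
def w : G := PresentedGroup.of 3
def a : G := PresentedGroup.of 4
def b : G := PresentedGroup.of 5

/-- The central element `z = g⁻⁶·[y,x]`. -/
def z : G := g ^ (-6 : ℤ) * (y * x * y⁻¹ * x⁻¹)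

open scoped commutatorElement

section Commutator

variable {H : Type*} [Group H]

theorem commutatorElement_mul_right_of_commute {u v c : H} (hc : Commute c v) :
    ⁅u * c, v⁆ = ⁅u, v⁆ :=
  calc ⁅u * c, v⁆ = u * (c * v * c⁻¹) * u⁻¹ * v⁻¹ := by
        rw [commutatorElement_def]; group
    _ = ⁅u, v⁆ := by rw [hc.mul_inv_cancel, commutatorElement_def]

theorem commutatorElement_mul_inv_mul {p q s c : H} (hq : s * q * s⁻¹ = q)
    (hp : s * p * s⁻¹ = p * c) :
    ⁅p * q, p⁻¹ * s⁆ = ⁅p, q⁆ * c⁻¹ :=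
  calc ⁅p * q, p⁻¹ * s⁆ = p * q * p⁻¹ * (s * q * s⁻¹)⁻¹ * (s * p * s⁻¹)⁻¹ * p := by
        rw [commutatorElement_def]; group
    _ = ⁅p, q⁆ * c⁻¹ := by rw [hq, hp, commutatorElement_def]; group

end Commutator

theorem w_inv : w⁻¹ = w :=
  inv_eq_of_mul_eq_one_right (PresentedGroup.one_of_mem (x := W * W) (by simp [GRels]))

theorem commute_y_w : Commute y w :=
  commutatorElement_eq_one_iff_commute.mp
    (PresentedGroup.one_of_mem (x := Y * W * Y⁻¹ * W⁻¹) (by simp [GRels]))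

theorem commute_a_w : Commute a w :=
  commutatorElement_eq_one_iff_commute.mp
    (PresentedGroup.one_of_mem (x := A * W * A⁻¹ * W⁻¹) (by simp [GRels]))

theorem a_mul_x_mul_a_inv : a * x * a⁻¹ = x :=
  mul_inv_eq_one.mp
    (PresentedGroup.one_of_mem (x := A * X * A⁻¹ * X⁻¹) (by simp [GRels]))

theorem a_mul_y_mul_a_inv : a * y * a⁻¹ = y * w :=
  mul_inv_eq_one.mp
    (PresentedGroup.one_of_mem (x := A * Y * A⁻¹ * (Y * W)⁻¹) (by simp [GRels]))

theorem commutatorElement_yxw_inv_y_mul_a : ⁅y * x * w, y⁻¹ * a⁆ = ⁅y, x⁆ * w := by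
  have hw : Commute w (y⁻¹ * a) := (commute_y_w.symm.inv_right).mul_right commute_a_w.symm
  rw [commutatorElement_mul_right_of_commute hw,
    commutatorElement_mul_inv_mul a_mul_x_mul_a_inv a_mul_y_mul_a_inv, w_inv]

theorem automorphism_maps_z_to_zw_general (φ : G ≃* G)
    (hg : φ g = g) (hx : φ x = y⁻¹ * a) (hy : φ y = y * x * w) :
    φ z = z * w := by
  have hc : φ ⁅y, x⁆ = ⁅y, x⁆ * w := by
    rw [map_commutatorElement, hx, hy, commutatorElement_yxw_inv_y_mul_a]
  rw [z, ← commutatorElement_def, _root_.map_mul, map_zpow, hg, hc, ← mul_assoc]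

/-- Any automorphism `φ` of `G` with `φ(g) = g`, `φ(x) = y⁻¹a`, `φ(y) = yxw`, `φ(a) = b`,
`φ(b) = ab`, `φ(w) = w` satisfies `φ(z) = z·w` for `z = g⁻⁶·[y,x]`. -/
theorem automorphism_maps_z_to_zw (φ : G ≃* G)
    (hg : φ g = g) (hx : φ x = y⁻¹ * a) (hy : φ y = y * x * w)
    (ha : φ a = b) (hb : φ b = a * b) (hw : φ w = w) :
    φ z = z * w :=
  automorphism_maps_z_to_zw_general φ hg hx hy

end EyralOkaG
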